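/- Let f = ⊕_{𝐢∈S} α_𝐢 x^𝐢 ∈ 𝕋[x_1,…,x_n], let k ≥ 1 be a natural number, and let g = ⊕_{𝐢∈S} α_𝐢^k x^{k𝐢} (coefficients raised to the k-th tropical power, exponents multiplied by k). If a ∈ 𝕋^n and 𝐢₀ ∈ S satisfy f(a) = α_{𝐢₀} ⊙ a^{𝐢₀} (the value of f at a is attained by the monomial indexed 𝐢₀), then g(a) = (α_{𝐢₀} ⊙ a^{𝐢₀})^k. -/

import Mathlib

/-- The extended tropical semiring `𝕋`: tangible reals `(a, false)`,
ghost reals `(a, true)`, and `none` = `-∞`. -/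
def T : Type := Option (ℝ × Bool)

namespace T

/-- The tangible element of value `a`. -/
def tang (a : ℝ) : T := some (a, false)

/-- The ghost element `a^ν` of value `a`. -/
def ghost (a : ℝ) : T := some (a, true)

/-- Tropical addition on `𝕋`. -/
noncomputable def add : T → T → T
  | none, y => y
  | some p, none => some p
  | some (a, s), some (b, t) =>
      if a < b then some (b, t) else if b < a then some (a, s) else some (a, true)

/-- Tropical multiplication on `𝕋`. -/
noncomputable def mul : T → T → T
  | none, _ => none
  | some _, none => none
  | some (a, s), some (b, t) => some (a + b, s || t)

lemma add_assoc' : ∀ x y z : T, add (add x y) z = add x (add y z) := by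
  show ∀ x y z : Option (ℝ × Bool), @Eq (Option (ℝ × Bool)) (add (add x y) z) (add x (add y z))
  rintro (_ | ⟨a, s⟩) (_ | ⟨b, t⟩) (_ | ⟨c, u⟩) <;>
    simp only [add] <;>
    (try delta T) <;> (try split_ifs) <;>
    simp only [add] <;>
    (try delta T) <;> (try split_ifs) <;>
    first
      | rfl
      | (exfalso; linarith)
      | (refine congrArg some ?_; refine Prod.ext ?_ ?_ <;>
          first | rfl | linarith | simp)

lemma add_comm' : ∀ x y : T, add x y = add y x := by
  show ∀ x y : Option (ℝ × Bool), @Eq (Option (ℝ × Bool)) (add x y) (add y x)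
  rintro (_ | ⟨a, s⟩) (_ | ⟨b, t⟩) <;>
    simp only [add] <;>
    (try delta T) <;> (try split_ifs) <;>
    first
      | rfl
      | (exfalso; linarith)
      | (refine congrArg some ?_; refine Prod.ext ?_ ?_ <;>
          first | rfl | linarith | simp)

lemma mul_assoc' : ∀ x y z : T, mul (mul x y) z = mul x (mul y z) := by
  show ∀ x y z : Option (ℝ × Bool), @Eq (Option (ℝ × Bool)) (mul (mul x y) z) (mul x (mul y z))
  rintro (_ | ⟨a, s⟩) (_ | ⟨b, t⟩) (_ | ⟨c, u⟩) <;>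
    simp [mul, add_assoc, Bool.or_assoc]

lemma mul_comm' : ∀ x y : T, mul x y = mul y x := by
  show ∀ x y : Option (ℝ × Bool), @Eq (Option (ℝ × Bool)) (mul x y) (mul y x)
  rintro (_ | ⟨a, s⟩) (_ | ⟨b, t⟩) <;> simp [mul, add_comm, Bool.or_comm]

lemma left_distrib' : ∀ x y z : T, mul x (add y z) = add (mul x y) (mul x z) := by
  show ∀ x y z : Option (ℝ × Bool), @Eq (Option (ℝ × Bool)) (mul x (add y z)) (add (mul x y) (mul x z))
  rintro (_ | ⟨a, s⟩) (_ | ⟨b, t⟩) (_ | ⟨c, u⟩) <;>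
    simp only [add, mul] <;>
    (try delta T) <;> (try split_ifs) <;>
    simp only [add, mul] <;>
    (try delta T) <;> (try split_ifs) <;>
    first
      | rfl
      | (exfalso; linarith)
      | (refine congrArg some ?_; refine Prod.ext ?_ ?_ <;>
          first | rfl | linarith | simp)

noncomputable instance : Zero T := ⟨none⟩
noncomputable instance : One T := ⟨some (0, false)⟩
noncomputable instance : Add T := ⟨add⟩
noncomputable instance : Mul T := ⟨mul⟩

noncomputable instance : CommSemiring T where
  add := (· + ·)
  zero := 0
  add_assoc := add_assoc'
  zero_add := fun x => by cases x <;> rfl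
  add_zero := fun x => by cases x <;> rfl
  add_comm := add_comm'
  mul := (· * ·)
  one := 1
  mul_assoc := mul_assoc'
  one_mul := fun x => by
    show @Eq (Option (ℝ × Bool)) (mul (some (0, false)) x) x
    rcases x with _ | ⟨a, s⟩ <;> simp [mul]
  mul_one := fun x => by
    show @Eq (Option (ℝ × Bool)) (mul x (some (0, false))) x
    rcases x with _ | ⟨a, s⟩ <;> simp [mul]
  mul_comm := mul_comm'
  zero_mul := fun x => by cases x <;> rfl
  mul_zero := fun x => by cases x <;> rfl
  left_distrib := left_distrib'
  right_distrib := fun x y z => by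
    show mul (add x y) z = add (mul x z) (mul y z)
    rw [mul_comm', left_distrib', mul_comm' z x, mul_comm' z y]
  nsmul := nsmulRec

/-- Membership in the ghost part `𝕌̄ = 𝕌 ∪ {-∞}` of `𝕋`. -/
def isGhost : T → Prop
  | none => True
  | some (_, s) => s = true

/-- Membership in the tangible part `ℝ ∪ {-∞}` of `𝕋`. -/
def isTangible : T → Prop
  | none => True
  | some (_, s) => s = false

/-- The underlying real value (junk value `0` at `-∞`); this is `π` on elements `≠ -∞`. -/
def val : T → ℝ
  | none => 0
  | some (a, _) => a

/-- The ghost map `ν`. -/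
def nu : T → T
  | none => none
  | some (a, _) => some (a, true)

end T

namespace T

/-- The model value in the half line `[0,∞)`: `-∞ ↦ 0`, an element of value `a ↦ exp a`. -/
noncomputable def gval : T → ℝ
  | none => 0
  | some (a, _) => Real.exp a

lemma nu_isGhost : ∀ x : T, isGhost (nu x)
  | none => trivial
  | some (_, _) => rfl

lemma gval_injOn_tang : Set.InjOn gval {x : T | isTangible x} := by
  rintro (_ | ⟨a, s⟩) hx (_ | ⟨b, t⟩) hy h <;>
    simp only [gval, Set.mem_setOf_eq, isTangible] at hx hy h
  · rfl
  · exact absurd h.symm (Real.exp_pos b).ne'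
  · exact absurd h (Real.exp_pos a).ne'
  · rw [Real.exp_eq_exp] at h; subst hx; subst hy; subst h; rfl

lemma gval_injOn_ghost : Set.InjOn gval {x : T | isGhost x} := by
  rintro (_ | ⟨a, s⟩) hx (_ | ⟨b, t⟩) hy h <;>
    simp only [gval, Set.mem_setOf_eq, isGhost] at hx hy h
  · rfl
  · exact absurd h.symm (Real.exp_pos b).ne'
  · exact absurd h (Real.exp_pos a).ne'
  · rw [Real.exp_eq_exp] at h; subst hx; subst hy; subst h; rfl

lemma gval_image_tang : gval '' {x : T | isTangible x} = Set.Ici 0 := by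
  ext y
  constructor
  · rintro ⟨(_ | ⟨a, s⟩), hx, rfl⟩
    · exact Set.self_mem_Ici
    · exact le_of_lt (by simpa [gval] using Real.exp_pos a)
  · intro hy
    rcases eq_or_lt_of_le (Set.mem_Ici.mp hy : (0 : ℝ) ≤ y) with h | h
    · exact ⟨none, trivial, h⟩
    · exact ⟨some (Real.log y, false), rfl, by simp [gval, Real.exp_log h]⟩

lemma gval_image_ghost : gval '' {x : T | isGhost x} = Set.Ici 0 := by
  ext y
  constructor
  · rintro ⟨(_ | ⟨a, s⟩), hx, rfl⟩
    · exact Set.self_mem_Ici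
    · exact le_of_lt (by simpa [gval] using Real.exp_pos a)
  · intro hy
    rcases eq_or_lt_of_le (Set.mem_Ici.mp hy : (0 : ℝ) ≤ y) with h | h
    · exact ⟨none, trivial, h⟩
    · exact ⟨some (Real.log y, true), rfl, by simp [gval, Real.exp_log h]⟩

/-- The closed sets of the topology on `𝕋`: both the tangible and the ghost layers are
closed in the model `[0,∞)` of `𝕌̄`, and the ghost image of the tangible layer is
contained in the set. -/
def TIsClosed (W : Set T) : Prop :=
  IsClosed (gval '' (W ∩ {x | isTangible x})) ∧
  IsClosed (gval '' (W ∩ {x | isGhost x})) ∧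
  nu '' (W ∩ {x | isTangible x}) ⊆ W ∩ {x | isGhost x}

/-- The topology on `𝕋`. -/
noncomputable instance : TopologicalSpace T :=
  TopologicalSpace.ofClosed {W | TIsClosed W}
    (by
      refine ⟨?_, ?_, ?_⟩ <;> simp [TIsClosed])
    (fun A hA => by
      rcases A.eq_empty_or_nonempty with rfl | hne
      · rw [Set.sInter_empty]
        refine ⟨?_, ?_, ?_⟩
        · rw [Set.univ_inter, gval_image_tang]; exact isClosed_Ici
        · rw [Set.univ_inter, gval_image_ghost]; exact isClosed_Ici
        · rintro y ⟨x, ⟨-, _⟩, rfl⟩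
          exact ⟨trivial, nu_isGhost x⟩
      · have : Nonempty A := hne.to_subtype
        have h1 : (⋂₀ A) ∩ {x : T | isTangible x}
            = ⋂ (W : A), ((W : Set T) ∩ {x | isTangible x}) := by
          ext x
          simp only [Set.mem_inter_iff, Set.mem_sInter, Set.mem_iInter, Set.mem_setOf_eq]
          constructor
          · rintro ⟨h, ht⟩ W; exact ⟨h W W.2, ht⟩
          · intro h
            obtain ⟨W, hW⟩ := hne
            exact ⟨fun V hV => (h ⟨V, hV⟩).1, (h ⟨W, hW⟩).2⟩
        have h2 : (⋂₀ A) ∩ {x : T | isGhost x}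
            = ⋂ (W : A), ((W : Set T) ∩ {x | isGhost x}) := by
          ext x
          simp only [Set.mem_inter_iff, Set.mem_sInter, Set.mem_iInter, Set.mem_setOf_eq]
          constructor
          · rintro ⟨h, ht⟩ W; exact ⟨h W W.2, ht⟩
          · intro h
            obtain ⟨W, hW⟩ := hne
            exact ⟨fun V hV => (h ⟨V, hV⟩).1, (h ⟨W, hW⟩).2⟩
        refine ⟨?_, ?_, ?_⟩
        · rw [h1, Set.InjOn.image_iInter_eq
            (gval_injOn_tang.mono (Set.iUnion_subset fun W => Set.inter_subset_right))]
          exact isClosed_iInter fun W => (hA W.2).1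
        · rw [h2, Set.InjOn.image_iInter_eq
            (gval_injOn_ghost.mono (Set.iUnion_subset fun W => Set.inter_subset_right))]
          exact isClosed_iInter fun W => (hA W.2).2.1
        · rintro y ⟨x, ⟨hx, hxt⟩, rfl⟩
          refine ⟨fun W hW => ((hA hW).2.2 ⟨x, ⟨hx W hW, hxt⟩, rfl⟩).1, nu_isGhost x⟩)
    (fun A hA B hB => by
      have h1 : (A ∪ B) ∩ {x : T | isTangible x}
          = (A ∩ {x | isTangible x}) ∪ (B ∩ {x | isTangible x}) :=
        Set.union_inter_distrib_right A B _
      have h2 : (A ∪ B) ∩ {x : T | isGhost x}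
          = (A ∩ {x | isGhost x}) ∪ (B ∩ {x | isGhost x}) :=
        Set.union_inter_distrib_right A B _
      refine ⟨?_, ?_, ?_⟩
      · rw [h1, Set.image_union]; exact hA.1.union hB.1
      · rw [h2, Set.image_union]; exact hA.2.1.union hB.2.1
      · rintro y ⟨x, ⟨hx, hxt⟩, rfl⟩
        rcases hx with hxA | hxB
        · have h := hA.2.2 ⟨x, ⟨hxA, hxt⟩, rfl⟩
          exact ⟨Or.inl h.1, h.2⟩
        · have h := hB.2.2 ⟨x, ⟨hxB, hxt⟩, rfl⟩
          exact ⟨Or.inr h.1, h.2⟩)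

end T

/-!
For `k ≥ 1` the map `x ↦ x ^ k` is additive on `𝕋`: scaling real values by `k > 0` preserves
their order, and a tie stays a tie, so the `k`-th power of `x ⊕ y` is `x ^ k ⊕ y ^ k`.
Pushing it through `f(a) = ⊕ αᵢ aⁱ` turns every term into `αᵢ^k a^{k i}`, so `g(a) = f(a) ^ k`.
-/

namespace T

def mk (a : ℝ) (s : Bool) : T := some (a, s)

lemma eq_zero_or_eq_mk : ∀ x : T, x = 0 ∨ ∃ a s, x = mk a s
  | none => .inl rfl
  | some (a, s) => .inr ⟨a, s, rfl⟩

lemma mk_add_mk (a b : ℝ) (s t : Bool) :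
    mk a s + mk b t = if a < b then mk b t else if b < a then mk a s else mk a true :=
  rfl

lemma mk_mul_mk (a b : ℝ) (s t : Bool) : mk a s * mk b t = mk (a + b) (s || t) := rfl

lemma mk_pow (a : ℝ) (s : Bool) {k : ℕ} (hk : k ≠ 0) : mk a s ^ k = mk (k * a) s := by
  induction k with
  | zero => exact absurd rfl hk
  | succ m ih =>
    rcases eq_or_ne m 0 with rfl | hm
    · simp
    · rw [pow_succ, ih hm, mk_mul_mk, Bool.or_self]
      push_cast
      ring_nf

lemma add_pow_of_ne_zero {k : ℕ} (hk : k ≠ 0) (x y : T) : (x + y) ^ k = x ^ k + y ^ k := by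
  obtain rfl | ⟨a, s, rfl⟩ := x.eq_zero_or_eq_mk
  · simp [zero_pow hk]
  obtain rfl | ⟨b, t, rfl⟩ := y.eq_zero_or_eq_mk
  · simp [zero_pow hk]
  have hk' : (0 : ℝ) < k := by positivity
  simp only [mk_pow a s hk, mk_pow b t hk, mk_add_mk, mul_lt_mul_iff_right₀ hk']
  split_ifs with hab hba
  · exact mk_pow b t hk
  · exact mk_pow a s hk
  · obtain rfl : a = b := le_antisymm (not_lt.mp hba) (not_lt.mp hab)
    exact mk_pow a true hk

end T

namespace MvPolynomial

variable {R σ : Type*} [CommSemiring R]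

theorem eval_sum_monomial_nsmul_coeff_pow {k : ℕ} (hk : k ≠ 0)
    (add_pow_k : ∀ x y : R, (x + y) ^ k = x ^ k + y ^ k) (f : MvPolynomial σ R) (a : σ → R) :
    eval a (∑ i ∈ f.support, monomial (k • i) (coeff i f ^ k)) = eval a f ^ k := by
  let powHom : R →+ R := ⟨⟨(· ^ k), zero_pow hk⟩, add_pow_k⟩
  calc eval a (∑ i ∈ f.support, monomial (k • i) (coeff i f ^ k))
      = ∑ i ∈ f.support, powHom (eval a (monomial i (coeff i f))) := by
        simp only [map_sum, ← monomial_pow, eval_pow]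
        rfl
    _ = eval a f ^ k := by rw [← map_sum, ← map_sum, support_sum_monomial_coeff]; rfl

end MvPolynomial

theorem tropical_monomial_value_pow_general (n : ℕ) (f : MvPolynomial (Fin n) T) (k : ℕ)
    (hk : 1 ≤ k) (a : Fin n → T) (i₀ : Fin n →₀ ℕ)
    (h : MvPolynomial.eval a f
      = MvPolynomial.eval a (MvPolynomial.monomial i₀ (MvPolynomial.coeff i₀ f))) :
    MvPolynomial.eval a
        (∑ i ∈ f.support, MvPolynomial.monomial (k • i) (MvPolynomial.coeff i f ^ k))
      = MvPolynomial.eval a (MvPolynomial.monomial i₀ (MvPolynomial.coeff i₀ f)) ^ k := by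
  have hk0 : k ≠ 0 := Nat.one_le_iff_ne_zero.mp hk
  rw [MvPolynomial.eval_sum_monomial_nsmul_coeff_pow hk0 (T.add_pow_of_ne_zero hk0), h]

/-- Proposition `thm:maximumMonomialValue`: if the value of `f` at `a`
is attained by the monomial indexed `i₀`, then the value of
`g = ⊕_i α_i^k x^{k i}` at `a` is the `k`-th power of that value. -/
theorem tropical_monomial_value_pow (n : ℕ) (f : MvPolynomial (Fin n) T) (k : ℕ)
    (hk : 1 ≤ k) (a : Fin n → T) (i₀ : Fin n →₀ ℕ) (hi₀ : i₀ ∈ f.support)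
    (h : MvPolynomial.eval a f
      = MvPolynomial.eval a (MvPolynomial.monomial i₀ (MvPolynomial.coeff i₀ f))) :
    MvPolynomial.eval a
        (∑ i ∈ f.support, MvPolynomial.monomial (k • i) (MvPolynomial.coeff i f ^ k))
      = MvPolynomial.eval a (MvPolynomial.monomial i₀ (MvPolynomial.coeff i₀ f)) ^ k :=
  tropical_monomial_value_pow_general n f k hk a i₀ h
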